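/- There exists a set S ⊆ ℤ³ such that: (a) S is a 1-PTMC in Λ_3; in particular S is a perfect dominating set of Λ_3, i.e. every vertex of ℤ³ not in S is adjacent in Λ_3 to exactly one vertex of S; (b) S is invariant under the translations v ↦ v + 6e_1, v ↦ v + 6e_2 and v ↦ v + 3e_3; (c) every connected component of the subgraph of Λ_3 induced by S is either a single vertex or a 4-cycle, all the 4-cycle components being translates of one another (each a translate of a unit square spanned by two coordinate directions), and components of both kinds occur; (d) any two distinct components are at ℓ1-distance at least 3. -/

import Mathlib

/-!
The code is periodic modulo `6ℤ × 6ℤ × 3ℤ`. In the layers `z ≡ 0, 1 (mod 3)` it consists of unit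
squares in the `xy`-plane with lower-left corners `≡ (0,0), (3,3)`, resp. `(0,3), (3,0) (mod 6)`;
in the layer `z ≡ 2` of the isolated points `≡ (2,2) (mod 3)`. Every property at stake only
relates points at `ℓ1`-distance at most `2`, so it reduces to a finite check on the torus of
`108` residues, which `decide` performs.

Perfect domination alone gives the first condition of a `1`-PTMC: the nearest codeword of a
non-codeword is its unique neighbour in the code. For the second, the codewords at truncated
distance at most `1` from a point are at `ℓ1`-distance at most `2` from each other, and such
codewords lie in one component. Components are the fibres of the map sending a codeword to the
lower-left corner of its square (an isolated point to itself): codewords at `ℓ1`-distance at most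
`2` have the same corner, and each codeword is joined to its corner by a path inside the code.
-/

/-- The `n`-dimensional grid graph `Λ_n` on `ℤ^n`: two vertices are adjacent
iff their `ℓ1`-distance is `1`. -/
def gridGraph (n : ℕ) : SimpleGraph (Fin n → ℤ) where
  Adj u v := ∑ i, |u i - v i| = 1
  symm := by
    constructor
    intro u v h
    have : ∑ i, |v i - u i| = ∑ i, |u i - v i| :=
      Finset.sum_congr rfl fun i _ => abs_sub_comm _ _
    rw [this]; exact h
  loopless := by
    constructor
    intro u h
    simp at h

/-- The truncated distance `ρ` on `ℤ^n` (valued in `ℕ`): the Hamming distance if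
all coordinates differ by at most `1`, and `n+1` otherwise. -/
def trho (n : ℕ) (u v : Fin n → ℤ) : ℕ :=
  if ∀ i, |u i - v i| ≤ 1 then (Finset.univ.filter fun i => u i ≠ v i).card
  else n + 1

/-- Truncated distance from a point to a set, as the infimum of truncated distances. -/
noncomputable def trhoSet (n : ℕ) (u : Fin n → ℤ) (S : Set (Fin n → ℤ)) : ℕ :=
  sInf {d | ∃ s ∈ S, trho n u s = d}

/-- The vertex set (in `ℤ^n`) of a connected component `H` of the subgraph of `Λ_n`
induced by `S`. -/
def compVerts (n : ℕ) (S : Set (Fin n → ℤ))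
    (H : ((gridGraph n).induce S).ConnectedComponent) : Set (Fin n → ℤ) :=
  {v | ∃ h : v ∈ S, ((gridGraph n).induce S).connectedComponentMk ⟨v, h⟩ = H}

/-- `S` is a `t`-perfect truncated-metric code in `Λ_n`. -/
def IsPTMC (n t : ℕ) (S : Set (Fin n → ℤ)) : Prop :=
  (∀ u : Fin n → ℤ, ∃! s, s ∈ S ∧ trho n u s = trhoSet n u S) ∧
  (∀ u : Fin n → ℤ, ∃! H : ((gridGraph n).induce S).ConnectedComponent,
    trhoSet n u (compVerts n S H) ≤ t)

theorem SimpleGraph.Reachable.apply_eq_of_forall_adj {V β : Type*} {G : SimpleGraph V}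
    {f : V → β} (hf : ∀ ⦃x y⦄, G.Adj x y → f x = f y) {x y : V} (h : G.Reachable x y) :
    f x = f y := by
  obtain ⟨p⟩ := h
  induction p with
  | nil => rfl
  | cons hadj _ ih => exact (hf hadj).trans ih

section TruncatedDistance

variable {n : ℕ}

theorem gridGraph_adj_iff {u v : Fin n → ℤ} :
    (gridGraph n).Adj u v ↔ ∑ i, |u i - v i| = 1 := Iff.rfl

theorem abs_le_sum_abs (δ : Fin n → ℤ) (i : Fin n) : |δ i| ≤ ∑ j, |δ j| :=
  Finset.single_le_sum (fun j _ => abs_nonneg (δ j)) (Finset.mem_univ i)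

theorem sum_abs_eq_zero_iff {δ : Fin n → ℤ} : ∑ i, |δ i| = 0 ↔ δ = 0 := by
  simp [Finset.sum_eq_zero_iff_of_nonneg, funext_iff]

theorem sum_abs_eq_hammingNorm {δ : Fin n → ℤ} (h : ∀ i, |δ i| ≤ 1) :
    ∑ i, |δ i| = hammingNorm δ := by
  rw [hammingNorm, Finset.natCast_card_filter]
  refine Finset.sum_congr rfl fun i _ => ?_
  have := h i
  split_ifs with hi
  · have := abs_pos.2 hi; omega
  · simp_all

theorem trho_eq_hammingNorm {u v : Fin n → ℤ} (h : ∀ i, |u i - v i| ≤ 1) :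
    trho n u v = hammingNorm (u - v) := by
  simp only [trho, if_pos h, hammingNorm, Pi.sub_apply, sub_ne_zero]

theorem trho_eq_zero_iff {u v : Fin n → ℤ} : trho n u v = 0 ↔ u = v := by
  refine ⟨fun h => ?_, by rintro rfl; simp [trho]⟩
  unfold trho at h
  split_ifs at h
  · simpa [Finset.card_eq_zero, Finset.filter_eq_empty_iff, funext_iff] using h

theorem trho_eq_one_iff_adj {u v : Fin n → ℤ} : trho n u v = 1 ↔ (gridGraph n).Adj u v := by
  rw [gridGraph_adj_iff]
  by_cases hle : ∀ i, |u i - v i| ≤ 1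
  · have := sum_abs_eq_hammingNorm (δ := u - v) hle
    simp only [Pi.sub_apply] at this
    rw [trho_eq_hammingNorm hle, this]
    norm_cast
  · have hn : n ≠ 0 := by rintro rfl; exact hle (fun i => i.elim0)
    have hsum : ¬ ∑ i, |u i - v i| = 1 := fun h =>
      hle fun i => h ▸ abs_le_sum_abs (u - v) i
    simp only [trho, if_neg hle, hsum, iff_false]
    omega

theorem sum_abs_sub_le_one_of_trho_le_one {u v : Fin n → ℤ} (h : trho n u v ≤ 1) :
    ∑ i, |u i - v i| ≤ 1 := by
  rcases Nat.le_one_iff_eq_zero_or_eq_one.1 h with h | h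
  · simp [trho_eq_zero_iff.1 h]
  · exact (gridGraph_adj_iff.1 (trho_eq_one_iff_adj.1 h)).le

theorem trhoSet_le_trho {S : Set (Fin n → ℤ)} {u s : Fin n → ℤ} (hs : s ∈ S) :
    trhoSet n u S ≤ trho n u s :=
  Nat.sInf_le ⟨s, hs, rfl⟩

theorem exists_trho_eq_trhoSet {S : Set (Fin n → ℤ)} (u : Fin n → ℤ) (hS : S.Nonempty) :
    ∃ s ∈ S, trho n u s = trhoSet n u S :=
  let ⟨s, hs⟩ := hS
  Nat.sInf_mem (s := {d | ∃ s ∈ S, trho n u s = d}) ⟨_, s, hs, rfl⟩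

variable {S : Set (Fin n → ℤ)}

theorem existsUnique_trho_eq_trhoSet_of_perfect
    (hS : ∀ v ∉ S, ∃! s, s ∈ S ∧ (gridGraph n).Adj v s) (u : Fin n → ℤ) :
    ∃! s, s ∈ S ∧ trho n u s = trhoSet n u S := by
  by_cases hu : u ∈ S
  · have h0 : trhoSet n u S = 0 := Nat.le_zero.1 (trho_eq_zero_iff.2 rfl ▸ trhoSet_le_trho hu)
    exact ⟨u, ⟨hu, by rw [h0, trho_eq_zero_iff]⟩,
      fun s hs => (trho_eq_zero_iff.1 (hs.2.trans h0)).symm⟩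
  obtain ⟨s, ⟨hs, hadj⟩, huniq⟩ := hS u hu
  have h1 : trhoSet n u S = 1 := by
    obtain ⟨s', hs', h'⟩ := exists_trho_eq_trhoSet u ⟨s, hs⟩
    have hle : trhoSet n u S ≤ 1 := trho_eq_one_iff_adj.2 hadj ▸ trhoSet_le_trho hs
    have hne : trhoSet n u S ≠ 0 := fun h0 => hu (trho_eq_zero_iff.1 (h'.trans h0) ▸ hs')
    omega
  exact ⟨s, ⟨hs, by rw [h1, trho_eq_one_iff_adj]; exact hadj⟩,
    fun s' hs' => huniq s' ⟨hs'.1, trho_eq_one_iff_adj.1 (hs'.2.trans h1)⟩⟩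

theorem exists_trho_le_one_of_perfect
    (hS : ∀ v ∉ S, ∃! s, s ∈ S ∧ (gridGraph n).Adj v s) (u : Fin n → ℤ) :
    ∃ s ∈ S, trho n u s ≤ 1 := by
  by_cases hu : u ∈ S
  · exact ⟨u, hu, (trho_eq_zero_iff.2 rfl).trans_le zero_le_one⟩
  · obtain ⟨s, ⟨hs, hadj⟩, -⟩ := hS u hu
    exact ⟨s, hs, (trho_eq_one_iff_adj.2 hadj).le⟩

theorem existsUnique_trhoSet_compVerts_le {t : ℕ} {u : Fin n → ℤ}
    (hex : ∃ s ∈ S, trho n u s ≤ t)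
    (hsame : ∀ s (hs : s ∈ S) s' (hs' : s' ∈ S), trho n u s ≤ t → trho n u s' ≤ t →
      ((gridGraph n).induce S).connectedComponentMk ⟨s, hs⟩ =
        ((gridGraph n).induce S).connectedComponentMk ⟨s', hs'⟩) :
    ∃! H : ((gridGraph n).induce S).ConnectedComponent, trhoSet n u (compVerts n S H) ≤ t := by
  obtain ⟨s, hs, hst⟩ := hex
  refine ⟨_, (trhoSet_le_trho (S := compVerts n S _) ⟨hs, rfl⟩).trans hst, fun H hH => ?_⟩
  induction H using SimpleGraph.ConnectedComponent.ind with | h x => ?_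
  obtain ⟨x, hx⟩ := x
  obtain ⟨s', ⟨hs', hs'H⟩, hts'⟩ := exists_trho_eq_trhoSet (S := compVerts n S _) u ⟨x, hx, rfl⟩
  rw [← hs'H]
  exact hsame s' hs' s hs (hts' ▸ hH) hst

end TruncatedDistance

namespace SquareCode

abbrev Torus : Type := ZMod 6 × ZMod 6 × ZMod 3

def toTorus (v : Fin 3 → ℤ) : Torus := ((v 0 : ZMod 6), (v 1 : ZMod 6), (v 2 : ZMod 3))

theorem toTorus_add (u v : Fin 3 → ℤ) : toTorus (u + v) = toTorus u + toTorus v := by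
  simp [toTorus]

theorem toTorus_eq_add_sub (v w : Fin 3 → ℤ) : toTorus w = toTorus v + toTorus (w - v) := by
  rw [← toTorus_add, add_sub_cancel]

def codeResidues : Finset Torus :=
  {(0,0,0), (1,0,0), (0,1,0), (1,1,0), (3,3,0), (4,3,0), (3,4,0), (4,4,0),
   (0,3,1), (1,3,1), (0,4,1), (1,4,1), (3,0,1), (4,0,1), (3,1,1), (4,1,1),
   (2,2,2), (5,2,2), (2,5,2), (5,5,2)}

def code : Set (Fin 3 → ℤ) := {v | toTorus v ∈ codeResidues}

theorem mem_code {v : Fin 3 → ℤ} : v ∈ code ↔ toTorus v ∈ codeResidues := Iff.rfl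

theorem mem_code_iff_add_mem {c : Fin 3 → ℤ} (hc : toTorus c = 0) (v : Fin 3 → ℤ) :
    v ∈ code ↔ v + c ∈ code := by
  rw [mem_code, mem_code, toTorus_add, hc, add_zero]

/-- The displacement from a codeword with residue `r` to the lower-left corner of its
component; its values at non-code residues are never used. -/
def cornerOffset (r : Torus) : Fin 3 → ℤ :=
  if r.2.2 = 2 then 0 else ![-((r.1.val % 3 : ℕ) : ℤ), -((r.2.1.val % 3 : ℕ) : ℤ), 0]

def anchor (v : Fin 3 → ℤ) : Fin 3 → ℤ := v + cornerOffset (toTorus v)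

/-- `noncomputable` only because `Finset.Icc` on `ℤ` elaborates through a noncomputable order
instance; the kernel still evaluates it, which is all `decide` needs. -/
noncomputable def l1Ball (k : ℕ) : Finset (Fin 3 → ℤ) :=
  (Fintype.piFinset fun _ => Finset.Icc (-(k : ℤ)) k).filter fun δ => ∑ i, |δ i| ≤ k

theorem mem_l1Ball {k : ℕ} {δ : Fin 3 → ℤ} : δ ∈ l1Ball k ↔ ∑ i, |δ i| ≤ k := by
  simp only [l1Ball, Finset.mem_filter, Fintype.mem_piFinset, Finset.mem_Icc,
    and_iff_right_iff_imp]
  exact fun h i => abs_le.1 ((abs_le_sum_abs δ i).trans h)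

def unitSquare : Finset (Fin 3 → ℤ) :=
  {0, Pi.single 0 1, Pi.single 1 1, Pi.single 0 1 + Pi.single 1 1}

def componentShape (r : Torus) : Finset (Fin 3 → ℤ) :=
  unitSquare.filter fun δ => r + toTorus δ ∈ codeResidues ∧ cornerOffset (r + toTorus δ) = -δ

set_option maxRecDepth 10000

theorem card_filter_l1Ball_one_of_notMem : ∀ r ∉ codeResidues,
    ((l1Ball 1).filter fun δ => r + toTorus δ ∈ codeResidues).card = 1 := by
  decide

theorem add_cornerOffset_of_mem_l1Ball_two : ∀ r ∈ codeResidues, ∀ δ ∈ l1Ball 2,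
    r + toTorus δ ∈ codeResidues → δ + cornerOffset (r + toTorus δ) = cornerOffset r := by
  decide

theorem exists_step_toward_corner : ∀ r ∈ codeResidues, cornerOffset r ≠ 0 →
    ∃ δ ∈ l1Ball 1, r + toTorus δ ∈ codeResidues ∧
      ∑ i, (cornerOffset (r + toTorus δ) i).natAbs < ∑ i, (cornerOffset r i).natAbs := by
  decide

theorem neg_cornerOffset_mem_unitSquare : ∀ r ∈ codeResidues, -cornerOffset r ∈ unitSquare := by
  decide

theorem componentShape_eq_singleton_or_unitSquare : ∀ r ∈ codeResidues, cornerOffset r = 0 →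
    componentShape r = {0} ∨ componentShape r = unitSquare := by
  decide

theorem adj_add_of_mem_l1Ball_one {v δ : Fin 3 → ℤ} (hδ : δ ∈ l1Ball 1) (h0 : δ ≠ 0) :
    (gridGraph 3).Adj v (v + δ) := by
  have h1 := mem_l1Ball.1 hδ
  have h2 := mt sum_abs_eq_zero_iff.1 h0
  have h3 := Finset.sum_nonneg fun i (_ : i ∈ Finset.univ) => abs_nonneg (δ i)
  simp only [gridGraph_adj_iff, Pi.add_apply, sub_add_cancel_left, abs_neg]
  omega

theorem code_perfect : ∀ v ∉ code, ∃! s, s ∈ code ∧ (gridGraph 3).Adj v s := by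
  intro v hv
  obtain ⟨δ, hδ⟩ := Finset.card_eq_one.1 (card_filter_l1Ball_one_of_notMem _ hv)
  have hmem : δ ∈ l1Ball 1 ∧ toTorus v + toTorus δ ∈ codeResidues :=
    Finset.mem_filter.1 (hδ ▸ Finset.mem_singleton_self δ)
  have h0 : δ ≠ 0 := by
    rintro rfl
    exact hv (by simpa [mem_code, toTorus] using hmem.2)
  refine ⟨v + δ, ⟨by rw [mem_code, toTorus_add]; exact hmem.2,
    adj_add_of_mem_l1Ball_one hmem.1 h0⟩, ?_⟩
  rintro s ⟨hs, hadj⟩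
  have hsv : s - v ∈ (l1Ball 1).filter fun δ => toTorus v + toTorus δ ∈ codeResidues := by
    refine Finset.mem_filter.2 ⟨mem_l1Ball.2 ?_, toTorus_eq_add_sub v s ▸ hs⟩
    simp only [Pi.sub_apply, abs_sub_comm (s _)]
    exact (gridGraph_adj_iff.1 hadj).le
  rw [hδ, Finset.mem_singleton] at hsv
  rw [← hsv, add_sub_cancel]

theorem anchor_eq_of_sum_abs_sub_le_two {v w : Fin 3 → ℤ} (hv : v ∈ code) (hw : w ∈ code)
    (h : ∑ i, |v i - w i| ≤ 2) : anchor w = anchor v := by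
  have hδ : w - v ∈ l1Ball 2 := mem_l1Ball.2 (by simpa [abs_sub_comm] using h)
  have := add_cornerOffset_of_mem_l1Ball_two _ hv _ hδ (toTorus_eq_add_sub v w ▸ hw)
  rw [← toTorus_eq_add_sub] at this
  rw [anchor, anchor, ← this]
  abel

theorem reachable_anchor {v : Fin 3 → ℤ} (hv : v ∈ code) :
    ∃ a : code, a.1 = anchor v ∧ ((gridGraph 3).induce code).Reachable ⟨v, hv⟩ a := by
  induction hm : ∑ i, (cornerOffset (toTorus v) i).natAbs using Nat.strong_induction_on
    generalizing v with
  | _ m ih =>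
  by_cases h0 : cornerOffset (toTorus v) = 0
  · exact ⟨⟨v, hv⟩, by simp [anchor, h0], .refl _⟩
  obtain ⟨δ, hδ, hw, hlt⟩ := exists_step_toward_corner _ hv h0
  have hδ0 : δ ≠ 0 := by rintro rfl; simp [toTorus] at hlt
  rw [← toTorus_add] at hw hlt
  have hadj : (gridGraph 3).Adj v (v + δ) := adj_add_of_mem_l1Ball_one hδ hδ0
  obtain ⟨a, ha, hreach⟩ := ih _ (hm ▸ hlt) hw rfl
  refine ⟨a, ha.trans (anchor_eq_of_sum_abs_sub_le_two hv hw
    ((gridGraph_adj_iff.1 hadj).trans_le one_le_two)), ?_⟩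
  have hadj' : ((gridGraph 3).induce code).Adj ⟨v, hv⟩ ⟨v + δ, hw⟩ := hadj
  exact hadj'.reachable.trans hreach

theorem connectedComponentMk_eq_iff {v w : Fin 3 → ℤ} (hv : v ∈ code) (hw : w ∈ code) :
    ((gridGraph 3).induce code).connectedComponentMk ⟨v, hv⟩ =
        ((gridGraph 3).induce code).connectedComponentMk ⟨w, hw⟩ ↔ anchor v = anchor w := by
  rw [SimpleGraph.ConnectedComponent.eq]
  refine ⟨fun h => h.apply_eq_of_forall_adj (f := fun x : code => anchor x.1) fun x y hxy =>
    (anchor_eq_of_sum_abs_sub_le_two x.2 y.2 ((gridGraph_adj_iff.1 hxy).trans_le one_le_two)).symm,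
    fun h => ?_⟩
  obtain ⟨a, ha, hva⟩ := reachable_anchor hv
  obtain ⟨b, hb, hwb⟩ := reachable_anchor hw
  obtain rfl : a = b := Subtype.ext (ha.trans (h.trans hb.symm))
  exact hva.trans hwb.symm

theorem anchor_mem_code {v : Fin 3 → ℤ} (hv : v ∈ code) : anchor v ∈ code := by
  obtain ⟨a, ha, -⟩ := reachable_anchor hv
  exact ha ▸ a.2

theorem cornerOffset_anchor {v : Fin 3 → ℤ} (hv : v ∈ code) :
    cornerOffset (toTorus (anchor v)) = 0 := by
  obtain ⟨a, ha, hva⟩ := reachable_anchor hv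
  have h := (connectedComponentMk_eq_iff hv a.2).1 (SimpleGraph.ConnectedComponent.sound hva)
  have : a.1 + cornerOffset (toTorus a.1) = a.1 := h.symm.trans ha.symm
  rwa [← ha, ← add_eq_left]

theorem compVerts_connectedComponentMk {v : Fin 3 → ℤ} (hv : v ∈ code) :
    compVerts 3 code (((gridGraph 3).induce code).connectedComponentMk ⟨v, hv⟩) =
      (anchor v + ·) '' componentShape (toTorus (anchor v)) := by
  ext w
  constructor
  · rintro ⟨hw, hwv⟩
    rw [connectedComponentMk_eq_iff] at hwv
    have hw' : anchor v + -cornerOffset (toTorus w) = w := by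
      rw [← hwv, anchor, add_neg_cancel_right]
    refine ⟨-cornerOffset (toTorus w),
      Finset.mem_filter.2 ⟨neg_cornerOffset_mem_unitSquare _ hw, ?_, ?_⟩, hw'⟩
    · rw [← toTorus_add, hw']
      exact hw
    · rw [← toTorus_add, hw', neg_neg]
  · rintro ⟨δ, hδ, rfl⟩
    rw [Finset.mem_coe, componentShape, Finset.mem_filter, ← toTorus_add] at hδ
    refine ⟨hδ.2.1, (connectedComponentMk_eq_iff _ _).2 ?_⟩
    rw [anchor, hδ.2.2, add_neg_cancel_right]

theorem image_unitSquare (a : Fin 3 → ℤ) :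
    (a + ·) '' (unitSquare : Set (Fin 3 → ℤ)) =
      {a, a + Pi.single 0 1, a + Pi.single 1 1, a + Pi.single 0 1 + Pi.single 1 1} := by
  simp [unitSquare, Set.image_insert_eq, add_assoc]

theorem compVerts_eq_singleton_or_square (H : ((gridGraph 3).induce code).ConnectedComponent) :
    (∃ v, compVerts 3 code H = {v}) ∨
      ∃ w, compVerts 3 code H =
        {w, w + Pi.single 0 1, w + Pi.single 1 1, w + Pi.single 0 1 + Pi.single 1 1} := by
  induction H using SimpleGraph.ConnectedComponent.ind with | h x => ?_
  obtain ⟨v, hv⟩ := x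
  rw [compVerts_connectedComponentMk hv]
  rcases componentShape_eq_singleton_or_unitSquare _ (anchor_mem_code hv) (cornerOffset_anchor hv)
    with h | h
  · exact .inl ⟨anchor v, by simp [h]⟩
  · exact .inr ⟨anchor v, by rw [h, image_unitSquare]⟩

theorem exists_compVerts_eq_singleton :
    ∃ H : ((gridGraph 3).induce code).ConnectedComponent, ∃ v, compVerts 3 code H = {v} := by
  have hv : ![2, 2, 2] ∈ code := mem_code.2 (by decide)
  have ha : anchor ![2, 2, 2] = ![2, 2, 2] := by decide
  refine ⟨_, ![2, 2, 2], (compVerts_connectedComponentMk hv).trans ?_⟩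
  rw [ha, show componentShape (toTorus ![2, 2, 2]) = {0} by decide]
  simp

theorem exists_compVerts_eq_square :
    ∃ H : ((gridGraph 3).induce code).ConnectedComponent, ∃ w, compVerts 3 code H =
      {w, w + Pi.single 0 1, w + Pi.single 1 1, w + Pi.single 0 1 + Pi.single 1 1} := by
  have hv : (0 : Fin 3 → ℤ) ∈ code := mem_code.2 (by decide)
  have ha : anchor 0 = 0 := by decide
  refine ⟨_, 0, (compVerts_connectedComponentMk hv).trans ?_⟩
  rw [ha, show componentShape (toTorus 0) = unitSquare by decide, image_unitSquare]

theorem anchor_eq_of_trho_le_one {u s s' : Fin 3 → ℤ} (hs : s ∈ code) (hs' : s' ∈ code)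
    (h : trho 3 u s ≤ 1) (h' : trho 3 u s' ≤ 1) : anchor s' = anchor s := by
  refine anchor_eq_of_sum_abs_sub_le_two hs hs' ?_
  calc ∑ i, |s i - s' i| ≤ ∑ i, (|u i - s i| + |u i - s' i|) :=
        Finset.sum_le_sum fun i _ => by rw [abs_sub_comm (u i)]; exact abs_sub_le _ _ _
    _ ≤ 2 := by
      rw [Finset.sum_add_distrib]
      linarith [sum_abs_sub_le_one_of_trho_le_one h, sum_abs_sub_le_one_of_trho_le_one h']

theorem code_isPTMC : IsPTMC 3 1 code :=
  ⟨existsUnique_trho_eq_trhoSet_of_perfect code_perfect, fun u =>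
    existsUnique_trhoSet_compVerts_le (exists_trho_le_one_of_perfect code_perfect u)
      fun _ hs _ hs' h h' => (connectedComponentMk_eq_iff hs hs').2
        (anchor_eq_of_trho_le_one hs hs' h h').symm⟩

theorem three_le_sum_abs_sub {H H' : ((gridGraph 3).induce code).ConnectedComponent}
    (hne : H ≠ H') {a b : Fin 3 → ℤ} (ha : a ∈ compVerts 3 code H) (hb : b ∈ compVerts 3 code H') :
    3 ≤ ∑ i, |a i - b i| := by
  obtain ⟨ha, rfl⟩ := ha
  obtain ⟨hb, rfl⟩ := hb
  by_contra! h
  exact hne ((connectedComponentMk_eq_iff ha hb).2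
    (anchor_eq_of_sum_abs_sub_le_two ha hb (by omega)).symm)

end SquareCode

open SquareCode in
/-- There is a `1`-PTMC `S` in `Λ_3` which is a perfect dominating set,
invariant under translation by `6e₁`, `6e₂`, `3e₃`, whose induced components are single
vertices and `4`-cycles (translates of a fixed unit square spanned by two coordinate
directions), both kinds occurring, with `ℓ1`-distance at least 3 between distinct
components. -/
theorem stmt_2 :
    ∃ S : Set (Fin 3 → ℤ),
      IsPTMC 3 1 S ∧
      (∀ v : Fin 3 → ℤ, v ∉ S → ∃! s, s ∈ S ∧ (gridGraph 3).Adj v s) ∧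
      (∀ v : Fin 3 → ℤ, v ∈ S ↔ v + (6 : ℤ) • Pi.single (0 : Fin 3) (1 : ℤ) ∈ S) ∧
      (∀ v : Fin 3 → ℤ, v ∈ S ↔ v + (6 : ℤ) • Pi.single (1 : Fin 3) (1 : ℤ) ∈ S) ∧
      (∀ v : Fin 3 → ℤ, v ∈ S ↔ v + (3 : ℤ) • Pi.single (2 : Fin 3) (1 : ℤ) ∈ S) ∧
      (∃ i j : Fin 3, i ≠ j ∧
        (∀ H : ((gridGraph 3).induce S).ConnectedComponent,
          (∃ v, compVerts 3 S H = {v}) ∨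
          (∃ w : Fin 3 → ℤ, compVerts 3 S H =
            {w, w + Pi.single i 1, w + Pi.single j 1,
              w + Pi.single i 1 + Pi.single j 1})) ∧
        (∃ H : ((gridGraph 3).induce S).ConnectedComponent, ∃ v,
          compVerts 3 S H = {v}) ∧
        (∃ H : ((gridGraph 3).induce S).ConnectedComponent, ∃ w : Fin 3 → ℤ,
          compVerts 3 S H =
            {w, w + Pi.single i 1, w + Pi.single j 1,
              w + Pi.single i 1 + Pi.single j 1})) ∧
      (∀ H H' : ((gridGraph 3).induce S).ConnectedComponent, H ≠ H' →
        ∀ a ∈ compVerts 3 S H, ∀ b ∈ compVerts 3 S H', 3 ≤ ∑ i, |a i - b i|) :=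
  ⟨code, code_isPTMC, code_perfect, mem_code_iff_add_mem (by decide),
    mem_code_iff_add_mem (by decide), mem_code_iff_add_mem (by decide),
    ⟨0, 1, by decide, compVerts_eq_singleton_or_square, exists_compVerts_eq_singleton,
      exists_compVerts_eq_square⟩,
    fun _ _ hne _ ha _ hb => three_le_sum_abs_sub hne ha hb⟩
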